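/- arXiv:2201.13446 — 3 statements merged into one kernel-verified Lean document; each statement's English description precedes it below -/
import Mathlib

section
/- If a series x over a finite alphabet A has a linear representation whose matrices u·M(b) for b ∈ A* span only a proper subspace W of K^{1×D} of dimension D̃ < D, then x has a linear representation of dimension D̃. -/
/-- if the row vectors u·M(b) span only a subspace of dimension D̃ < D,
then x has a linear representation of dimension D̃. -/
theorem stmt_4 {K : Type*} [Field K] {A : Type*} [Fintype A] {D Dt : ℕ}
    (x : List A → K)
    (u : Matrix (Fin 1) (Fin D) K) (M : A → Matrix (Fin D) (Fin D) K)
    (w : Matrix (Fin D) (Fin 1) K)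
    (hrep : ∀ b : List A, x b = (u * (b.map M).prod * w) 0 0)
    (hdim : Module.finrank K
      (Submodule.span K {v : Matrix (Fin 1) (Fin D) K | ∃ b : List A, v = u * (b.map M).prod}) = Dt)
    (hlt : Dt < D) :
    ∃ (u' : Matrix (Fin 1) (Fin Dt) K) (M' : A → Matrix (Fin Dt) (Fin Dt) K)
      (w' : Matrix (Fin Dt) (Fin 1) K),
      ∀ b : List A, x b = (u' * (b.map M').prod * w') 0 0 := by
  classical
  set W : Submodule K (Matrix (Fin 1) (Fin D) K) :=
    Submodule.span K {v : Matrix (Fin 1) (Fin D) K | ∃ b : List A, v = u * (b.map M).prod}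
    with hWdef
  -- right multiplication maps
  let f : A → Matrix (Fin 1) (Fin D) K →ₗ[K] Matrix (Fin 1) (Fin D) K := fun a =>
    { toFun := fun v => v * M a
      map_add' := fun p q => Matrix.add_mul p q (M a)
      map_smul' := fun c p => Matrix.smul_mul c p (M a) }
  have hmem : ∀ a : A, ∀ v ∈ W, f a v ∈ W := by
    intro a v hv
    induction hv using Submodule.span_induction with
    | mem v hvS =>
      obtain ⟨b, rfl⟩ := hvS
      refine Submodule.subset_span ⟨b ++ [a], ?_⟩
      simp [f, Matrix.mul_assoc]
    | zero => simpa [f, Matrix.zero_mul] using (Submodule.zero_mem W)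
    | add p q _ _ hp hq => simpa [f, Matrix.add_mul] using Submodule.add_mem W hp hq
    | smul c p _ hp => simpa [f, Matrix.smul_mul] using Submodule.smul_mem W c hp
  let g : A → W →ₗ[K] W := fun a => (f a).restrict (hmem a)
  have hgcoe : ∀ (a : A) (v : W), ((g a v : Matrix (Fin 1) (Fin D) K)) = (v : Matrix (Fin 1) (Fin D) K) * M a := fun a v => rfl
  haveI : FiniteDimensional K W := inferInstance
  let β : Module.Basis (Fin Dt) K W := (Module.finBasis K W).reindex (finCongr hdim)
  let M' : A → Matrix (Fin Dt) (Fin Dt) K := fun a => (LinearMap.toMatrix β β (g a)).transpose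
  let coordRow : W → Matrix (Fin 1) (Fin Dt) K := fun v => Matrix.of fun _ j => β.repr v j
  have hstep : ∀ (a : A) (v : W), coordRow (g a v) = coordRow v * M' a := by
    intro a v
    funext i j
    have h := congrFun (LinearMap.toMatrix_mulVec_repr β β (g a) v) j
    simp only [Matrix.mulVec, dotProduct] at h
    simp only [coordRow, Matrix.mul_apply, Matrix.of_apply, M', Matrix.transpose_apply, ← h]
    exact Finset.sum_congr rfl fun k _ => mul_comm _ _
  have key : ∀ (b : List A) (v : W),
      coordRow (b.foldl (fun s a => g a s) v) = coordRow v * (b.map M').prod := by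
    intro b
    induction b with
    | nil => intro v; simp
    | cons a b ih =>
      intro v
      simp only [List.foldl_cons, List.map_cons, List.prod_cons, ih (g a v), hstep,
        Matrix.mul_assoc]
  have hfold : ∀ (b : List A) (v : W),
      ((b.foldl (fun s a => g a s) v : W) : Matrix (Fin 1) (Fin D) K)
        = (v : Matrix (Fin 1) (Fin D) K) * (b.map M).prod := by
    intro b
    induction b with
    | nil => intro v; simp [Matrix.mul_one]
    | cons a b ih =>
      intro v
      simp only [List.foldl_cons, List.map_cons, List.prod_cons, ih (g a v), hgcoe,
        Matrix.mul_assoc]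
  have hu : u ∈ W := Submodule.subset_span ⟨[], by simp [Matrix.mul_one]⟩
  let w' : Matrix (Fin Dt) (Fin 1) K :=
    Matrix.of fun j _ => ((β j : Matrix (Fin 1) (Fin D) K) * w) 0 0
  have heval : ∀ v : W, ((v : Matrix (Fin 1) (Fin D) K) * w) 0 0 = (coordRow v * w') 0 0 := by
    intro v
    have hv : (v : Matrix (Fin 1) (Fin D) K)
        = ∑ j, β.repr v j • (β j : Matrix (Fin 1) (Fin D) K) := by
      conv_lhs => rw [← Module.Basis.sum_repr β v]
      push_cast
      rfl
    rw [hv]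
    simp [Matrix.sum_mul, Matrix.smul_mul, Matrix.sum_apply, Matrix.smul_apply,
      Matrix.mul_apply, coordRow, w', smul_eq_mul]
    simp only [Finset.sum_mul, Finset.mul_sum]
    rw [Finset.sum_comm]
    exact Finset.sum_congr rfl fun k _ => Finset.sum_congr rfl fun j _ => mul_assoc _ _ _
  refine ⟨coordRow ⟨u, hu⟩, M', w', fun b => ?_⟩
  have h1 : u * (b.map M).prod
      = ((b.foldl (fun s a => g a s) (⟨u, hu⟩ : W) : W) : Matrix (Fin 1) (Fin D) K) := by
    rw [hfold]
  rw [hrep b, h1, heval, key]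
end

section
/- The recognisable series x associated to a q-regular sequence y is compatible with regular sequences: x(b0) = x(b) for all words b ∈ {0,…,q−1}*, where b0 denotes b with the letter 0 appended. -/
/-!
Since `0 = q·0 + 0`, the recursion gives `w = v 0 = M 0 * v 0 = M 0 * w`: the start vector is
fixed by the matrix of the digit `0`. Appending `0` to a word `b` inserts exactly this factor
`M 0` directly in front of `w` in `u * M b * w`, so the value does not change.
-/

theorem mul_start_eq_of_linearRepresentation {K : Type*} [Semiring K] {q D : ℕ}
    {M : Fin q → Matrix (Fin D) (Fin D) K} {w : Matrix (Fin D) (Fin 1) K}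
    {v : ℕ → Matrix (Fin D) (Fin 1) K} (hv0 : v 0 = w)
    (hrec : ∀ (n : ℕ) (r : Fin q), v (q * n + r.val) = M r * v n) (r : Fin q) (hr : r.val = 0) :
    M r * w = w := by
  simpa [hr, hv0] using (hrec 0 r).symm

/-- the recognisable series associated to a q-regular sequence is compatible:
x(b0) = x(b) for all words b. -/
theorem stmt_9 {K : Type*} [Field K] (q D : ℕ) (hq : 2 ≤ q)
    (u : Matrix (Fin 1) (Fin D) K) (M : Fin q → Matrix (Fin D) (Fin D) K)
    (w : Matrix (Fin D) (Fin 1) K) (v : ℕ → Matrix (Fin D) (Fin 1) K)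
    (hv0 : v 0 = w)
    (hrec : ∀ (n : ℕ) (r : Fin q), v (q * n + r.val) = M r * v n)
    (x : List (Fin q) → K)
    (hx : ∀ b : List (Fin q), x b = (u * (b.map M).prod * w) 0 0) :
    ∀ b : List (Fin q), x (b ++ [⟨0, by omega⟩]) = x b := by
  intro b
  have hw : M ⟨0, by omega⟩ * w = w := mul_start_eq_of_linearRepresentation hv0 hrec _ rfl
  rw [hx, hx, List.map_append, List.prod_append, List.map_singleton, List.prod_singleton,
    Matrix.mul_assoc u, Matrix.mul_assoc, hw, ← Matrix.mul_assoc]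
end

section
/- Let y be a q-regular sequence, let x be its associated recognisable series, and let (u, M, w) be a minimal linear representation of x (as a recognisable series). Then (u, M, w) is also a linear representation of y, and it is a minimal linear representation of y. -/
open Matrix

namespace Stmt10Aux

variable {K : Type*} [Field K] {q : ℕ}

/-- value of a word; head = least significant digit. -/
def val (q : ℕ) : List (Fin q) → ℕ
  | [] => 0
  | r :: b => q * val q b + r.val

lemma val_append_zero (b : List (Fin q)) (r : Fin q) (hr : r.val = 0) :
    val q (b ++ [r]) = val q b := by
  induction b with
  | nil => simp [val, hr]
  | cons s b ih => simp [val, ih]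

/-- base-q digits as a word over Fin q. -/
def digs (hq : 2 ≤ q) : ℕ → List (Fin q)
  | 0 => []
  | (n+1) => ⟨(n+1) % q, Nat.mod_lt _ (by omega)⟩ :: digs hq ((n+1)/q)
  decreasing_by exact Nat.div_lt_self (Nat.succ_pos n) (by omega)

lemma digs_zero (hq : 2 ≤ q) : digs hq 0 = [] := by simp [digs]

lemma digs_pos (hq : 2 ≤ q) {m : ℕ} (hm : 0 < m) :
    digs hq m = ⟨m % q, Nat.mod_lt _ (by omega)⟩ :: digs hq (m / q) := by
  obtain ⟨n, rfl⟩ := Nat.exists_eq_add_of_lt hm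
  simp [digs]

lemma val_digs (hq : 2 ≤ q) (n : ℕ) : val q (digs hq n) = n := by
  induction n using Nat.strong_induction_on with
  | _ n ih =>
    rcases Nat.eq_zero_or_pos n with h | h
    · subst h; simp [digs_zero, val]
    · rw [digs_pos hq h, val]
      rw [ih (n / q) (Nat.div_lt_self h (by omega))]
      exact Nat.div_add_mod n q

lemma rep_val {Dm : ℕ} (Mm : Fin q → Matrix (Fin Dm) (Fin Dm) K)
    (ww : Matrix (Fin Dm) (Fin 1) K) (vv : ℕ → Matrix (Fin Dm) (Fin 1) K)
    (h0 : vv 0 = ww) (hrec : ∀ (n : ℕ) (r : Fin q), vv (q * n + r.val) = Mm r * vv n) :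
    ∀ b : List (Fin q), (b.map Mm).prod * ww = vv (val q b) := by
  intro b
  induction b with
  | nil => simp [val, h0]
  | cons r b ih =>
    rw [val, hrec, List.map_cons, List.prod_cons, Matrix.mul_assoc, ih]

lemma mulVec_col {D : ℕ} (A : Matrix (Fin 1) (Fin D) K) (w : Matrix (Fin D) (Fin 1) K) :
    (A.mulVec (fun i => w i 0)) 0 = (A * w) 0 0 := by
  simp [Matrix.mulVec, Matrix.mul_apply, dotProduct]

lemma obs {D : ℕ} (x : List (Fin q) → K)
    (u : Matrix (Fin 1) (Fin D) K) (M : Fin q → Matrix (Fin D) (Fin D) K)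
    (w : Matrix (Fin D) (Fin 1) K)
    (hrep : ∀ b : List (Fin q), x b = (u * (b.map M).prod * w) 0 0)
    (hmin : ∀ (D' : ℕ) (u' : Matrix (Fin 1) (Fin D') K)
        (M' : Fin q → Matrix (Fin D') (Fin D') K) (w' : Matrix (Fin D') (Fin 1) K),
        (∀ b : List (Fin q), x b = (u' * (b.map M').prod * w') 0 0) → D ≤ D')
    (z : Fin D → K)
    (hz : ∀ b : List (Fin q), ((u * (b.map M).prod).mulVec z) 0 = 0) : z = 0 := by
  by_contra hne
  set φ : List (Fin q) → ((Fin D → K) →ₗ[K] K) :=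
    fun b => (LinearMap.proj 0) ∘ₗ (Matrix.mulVecLin (u * (b.map M).prod)) with hφ
  set W : Submodule K (Fin D → K) := ⨅ b : List (Fin q), LinearMap.ker (φ b) with hW
  have hzW : z ∈ W := by
    rw [hW, Submodule.mem_iInf]; intro b; exact hz b
  have hWinv : ∀ r : Fin q, ∀ v ∈ W, (M r).mulVec v ∈ W := by
    intro r v hv
    rw [hW, Submodule.mem_iInf]
    intro b
    have hb := (Submodule.mem_iInf _).mp hv (b ++ [r])
    simp only [hφ, LinearMap.mem_ker, LinearMap.comp_apply, Matrix.mulVecLin_apply,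
      LinearMap.proj_apply] at hb ⊢
    rw [Matrix.mulVec_mulVec]
    rwa [List.map_append, List.prod_append, List.map_cons, List.map_nil, List.prod_cons,
      List.prod_nil, mul_one, ← Matrix.mul_assoc] at hb
  set Q := (Fin D → K) ⧸ W with hQ
  set n := Module.finrank K Q with hn
  have hnD : n < D := by
    have h1 : n + Module.finrank K W = D := by
      have := Submodule.finrank_quotient_add_finrank W
      simpa [hn, hQ] using this
    have h3 : 0 < Module.finrank K W :=
      Module.finrank_pos_iff_exists_ne_zero.mpr ⟨⟨z, hzW⟩, by simpa using hne⟩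
    omega
  set Mb : Fin q → Module.End K Q := fun r => Submodule.mapQ W W ((M r).mulVecLin)
      (fun v hv => by simpa using hWinv r v hv) with hMb
  have hWle : W ≤ LinearMap.ker (φ []) := hW ▸ iInf_le (fun b => LinearMap.ker (φ b)) []
  set ub : Q →ₗ[K] K := Submodule.liftQ W (φ []) hWle with hub
  have hMbmk : ∀ (r : Fin q) (zz : Fin D → K),
      Mb r (Submodule.Quotient.mk zz) = Submodule.Quotient.mk ((M r).mulVec zz) := by
    intro r zz
    rw [hMb]
    rw [Submodule.mapQ_apply, Matrix.mulVecLin_apply]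
  have hubmk : ∀ zz : Fin D → K,
      ub (Submodule.Quotient.mk zz) = (u.mulVec zz) 0 := by
    intro zz
    rw [hub, Submodule.liftQ_apply, hφ]
    simp
  set F : List (Fin q) → Module.End K Q := fun b => (b.map Mb).prod with hF
  have hFmk : ∀ (b : List (Fin q)) (zz : Fin D → K),
      F b (Submodule.Quotient.mk zz) = Submodule.Quotient.mk (((b.map M).prod).mulVec zz) := by
    intro b
    induction b with
    | nil => intro zz; simp [hF]
    | cons r b ih =>
      intro zz
      simp only [hF, List.map_cons, List.prod_cons] at ih ⊢
      rw [Module.End.mul_apply, ih, hMbmk, Matrix.mulVec_mulVec]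
  set wv : Fin D → K := fun i => w i 0 with hwv
  set wb : Q := Submodule.Quotient.mk wv with hwb
  set bQ : Module.Basis (Fin n) K Q := Module.finBasis K Q with hbQ
  set P1 : Module.Basis (Fin 1) K (Fin 1 → K) := Pi.basisFun K (Fin 1) with hP1
  set uL : Q →ₗ[K] (Fin 1 → K) := LinearMap.pi (fun _ : Fin 1 => ub) with huL
  set wL : (Fin 1 → K) →ₗ[K] Q := (LinearMap.proj 0).smulRight wb with hwL
  set uM : Matrix (Fin 1) (Fin n) K := LinearMap.toMatrix bQ P1 uL with huM
  set wM : Matrix (Fin n) (Fin 1) K := LinearMap.toMatrix P1 bQ wL with hwM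
  set MM : Fin q → Matrix (Fin n) (Fin n) K := fun r => LinearMap.toMatrix bQ bQ (Mb r) with hMM
  have hprod : ∀ b : List (Fin q), (b.map MM).prod = LinearMap.toMatrix bQ bQ (F b) := by
    intro b
    induction b with
    | nil => simp [hF, Module.End.one_eq_id, LinearMap.toMatrix_id]
    | cons r b ih =>
      simp only [List.map_cons, List.prod_cons, ih, hF]
      rw [Module.End.mul_eq_comp, LinearMap.toMatrix_comp bQ bQ bQ]
  have key : ∀ b : List (Fin q), (uM * (b.map MM).prod * wM) 0 0 = x b := by
    intro b
    rw [hprod, huM, hwM, ← LinearMap.toMatrix_comp bQ bQ P1, ← LinearMap.toMatrix_comp P1 bQ P1]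
    rw [LinearMap.toMatrix_apply]
    simp only [hP1, Pi.basisFun_repr]
    have e1 : wL ((Pi.basisFun K (Fin 1)) 0) = wb := by
      simp [hwL]
    calc (((uL ∘ₗ F b) ∘ₗ wL) ((Pi.basisFun K (Fin 1)) 0)) 0
        = uL (F b wb) 0 := by rw [LinearMap.comp_apply, e1, LinearMap.comp_apply]
      _ = ub (F b wb) := by rw [huL, LinearMap.pi_apply]
      _ = ub (Submodule.Quotient.mk (((b.map M).prod).mulVec wv)) := by rw [hwb, hFmk]
      _ = (u.mulVec (((b.map M).prod).mulVec wv)) 0 := hubmk _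
      _ = ((u * (b.map M).prod).mulVec wv) 0 := by rw [Matrix.mulVec_mulVec]
      _ = x b := by rw [hwv, mulVec_col, ← hrep]
  exact absurd (hmin n uM MM wM (fun b => (key b).symm)) (by omega)

end Stmt10Aux

/-- main theorem: a minimal linear representation of the recognisable
series associated to a q-regular sequence y is also a (minimal) linear representation of y. -/
theorem stmt_10 {K : Type*} [Field K] (q : ℕ) (hq : 2 ≤ q)
    (y : ℕ → K) (x : List (Fin q) → K)
    -- y is q-regular with some linear representation (u₀, M₀, w₀):
    (D₀ : ℕ) (u₀ : Matrix (Fin 1) (Fin D₀) K) (M₀ : Fin q → Matrix (Fin D₀) (Fin D₀) K)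
    (w₀ : Matrix (Fin D₀) (Fin 1) K) (v₀ : ℕ → Matrix (Fin D₀) (Fin 1) K)
    (hv₀0 : v₀ 0 = w₀)
    (hy₀ : ∀ n : ℕ, y n = (u₀ * v₀ n) 0 0)
    (hrec₀ : ∀ (n : ℕ) (r : Fin q), v₀ (q * n + r.val) = M₀ r * v₀ n)
    -- x is the recognisable series associated to y:
    (hx : ∀ b : List (Fin q), x b = (u₀ * (b.map M₀).prod * w₀) 0 0)
    -- (u, M, w) is a minimal linear representation of x:
    (D : ℕ) (u : Matrix (Fin 1) (Fin D) K) (M : Fin q → Matrix (Fin D) (Fin D) K)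
    (w : Matrix (Fin D) (Fin 1) K)
    (hrep : ∀ b : List (Fin q), x b = (u * (b.map M).prod * w) 0 0)
    (hmin : ∀ (D' : ℕ) (u' : Matrix (Fin 1) (Fin D') K)
        (M' : Fin q → Matrix (Fin D') (Fin D') K) (w' : Matrix (Fin D') (Fin 1) K),
        (∀ b : List (Fin q), x b = (u' * (b.map M').prod * w') 0 0) → D ≤ D') :
    -- (u, M, w) is a linear representation of y:
    (∃ v : ℕ → Matrix (Fin D) (Fin 1) K, v 0 = w ∧
        (∀ n : ℕ, y n = (u * v n) 0 0) ∧
        ∀ (n : ℕ) (r : Fin q), v (q * n + r.val) = M r * v n) ∧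
    -- and it is minimal among all linear representations of y:
    (∀ (D' : ℕ) (u' : Matrix (Fin 1) (Fin D') K)
        (M' : Fin q → Matrix (Fin D') (Fin D') K) (w' : Matrix (Fin D') (Fin 1) K)
        (v' : ℕ → Matrix (Fin D') (Fin 1) K),
        v' 0 = w' → (∀ n : ℕ, y n = (u' * v' n) 0 0) →
        (∀ (n : ℕ) (r : Fin q), v' (q * n + r.val) = M' r * v' n) → D ≤ D') := by
  classical
  -- x b = y (val b)
  have hxy : ∀ b : List (Fin q), x b = y (Stmt10Aux.val q b) := by
    intro b
    rw [hx, Matrix.mul_assoc, Stmt10Aux.rep_val M₀ w₀ v₀ hv₀0 hrec₀ b, hy₀]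
  set z0 : Fin q := ⟨0, by omega⟩ with hz0
  -- key: M z0 * w = w, via observability of the minimal representation
  have hz0v : (z0 : ℕ) = 0 := rfl
  have hMw : M z0 * w = w := by
    have hdiff : ((M z0).mulVec (fun i => w i 0) - fun i => w i 0) = 0 := by
      apply Stmt10Aux.obs x u M w hrep hmin
      intro b
      rw [Matrix.mulVec_sub, Pi.sub_apply, Matrix.mulVec_mulVec]
      rw [Stmt10Aux.mulVec_col, Stmt10Aux.mulVec_col, ← hrep]
      have h1 : x (b ++ [z0]) = (u * (b.map M).prod * M z0 * w) 0 0 := by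
        rw [hrep, List.map_append, List.prod_append]
        simp [Matrix.mul_assoc]
      rw [← h1, hxy, hxy, Stmt10Aux.val_append_zero b z0 hz0v, sub_self]
    have hvec : (M z0).mulVec (fun i => w i 0) = fun i => w i 0 := sub_eq_zero.mp hdiff
    ext i j
    have hj : j = 0 := Subsingleton.elim _ _
    subst hj
    have := congrFun hvec i
    simpa [Matrix.mulVec, Matrix.mul_apply, dotProduct] using this
  constructor
  · -- (u, M, w) is a linear representation of y
    refine ⟨fun n => ((Stmt10Aux.digs hq n).map M).prod * w, ?_, ?_, ?_⟩
    · simp [Stmt10Aux.digs_zero hq]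
    · intro n
      have := hxy (Stmt10Aux.digs hq n)
      rw [Stmt10Aux.val_digs hq] at this
      rw [← this, hrep, Matrix.mul_assoc]
    · intro n r
      show ((Stmt10Aux.digs hq (q * n + r.val)).map M).prod * w
          = M r * (((Stmt10Aux.digs hq n).map M).prod * w)
      rcases Nat.eq_zero_or_pos (q * n + r.val) with h | h
      · have h2 : q * n = 0 ∧ r.val = 0 := by omega
        have hn : n = 0 := by
          rcases Nat.mul_eq_zero.mp h2.1 with h' | h'
          · omega
          · exact h'
        have hr : r = z0 := Fin.ext (by rw [h2.2, hz0v])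
        subst hn
        rw [hr]
        simp [Stmt10Aux.digs_zero hq, hz0v, hMw]
      · rw [Stmt10Aux.digs_pos hq h]
        have hmod : (q * n + r.val) % q = r.val := by
          rw [Nat.mul_add_mod, Nat.mod_eq_of_lt r.isLt]
        have hdiv : (q * n + r.val) / q = n := by
          rw [Nat.mul_add_div (by omega), Nat.div_eq_of_lt r.isLt, add_zero]
        have heq : (⟨(q * n + r.val) % q, Nat.mod_lt _ (by omega)⟩ : Fin q) = r := by
          apply Fin.ext; simp [hmod]
        rw [heq, hdiv, List.map_cons, List.prod_cons, Matrix.mul_assoc]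
  · -- minimality among linear representations of y
    intro D' u' M' w' v' h0 hy' hrec'
    apply hmin D' u' M' w'
    intro b
    rw [hxy, hy', ← Stmt10Aux.rep_val M' w' v' h0 hrec' b, ← Matrix.mul_assoc]
end
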